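/- arXiv:2304.03377 — 2 statements merged into one kernel-verified Lean document; each statement's English description precedes it below -/
import Mathlib

section
/- The ratio (1+p)/2 is tight for Greedy with geometric usage durations: for every p ∈ [0,1] and every ε > 0 there exists an instance I with all usage-duration distributions equal to Geometric(p) such that Greedy(I) / OPT(I) ≤ (1 + p)/2 + ε. -/
open Finset

/-- An online policy for the online matching problem with reusable resources,
with `N` resources, `T` requests, and neighborhoods `Nbr`.  Upon arrival of
request `t`, the policy observes the time `t`, the set of currently available
resources, and the history of previously observed availability sets, and
matches the request to at most one available resource adjacent to `t`
(`none` means no match). -/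
structure Policy (N T : ℕ) (Nbr : Fin T → Finset (Fin N)) where
  act : Fin T → Finset (Fin N) → List (Finset (Fin N)) → Option (Fin N)
  feasible : ∀ t I hist i, act t I hist = some i → i ∈ I ∩ Nbr t

/-- Sample space of the shared-Bernoulli coupling for geometric usage
durations: `ω i t` is the return flag `P_{it} ~ Bernoulli (p i)`.  A resource
`i` that is unavailable returns at the start of time `t` iff `ω i t = true`;
this makes the usage duration of every match of `i` distributed as
`Geometric (p i)` on `{1, 2, ...}`. -/
abbrev Flags (N T : ℕ) := Fin N → Fin T → Bool

/-- One step of the dynamics at time `t`.  The state is the pair consisting of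
the set of resources unavailable at the end of the previous step and the
history of observed availability sets. -/
def step {N T : ℕ} {Nbr : Fin T → Finset (Fin N)} (π : Policy N T Nbr)
    (ω : Flags N T) (s : Finset (Fin N) × List (Finset (Fin N))) (t : Fin T) :
    Finset (Fin N) × List (Finset (Fin N)) :=
  let busy := s.1.filter fun i => ω i t = false
  let I : Finset (Fin N) := Finset.univ \ busy
  match π.act t I s.2 with
  | none => (busy, I :: s.2)
  | some i => (insert i busy, I :: s.2)

/-- The state just before step `n` (resources unavailable at the end of step
`n-1`, together with the observed history). -/
def stateUpTo {N T : ℕ} {Nbr : Fin T → Finset (Fin N)} (π : Policy N T Nbr)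
    (ω : Flags N T) (n : ℕ) : Finset (Fin N) × List (Finset (Fin N)) :=
  ((List.finRange T).take n).foldl (step π ω) (∅, [])

/-- `I_t`: the set of resources available at time `t` under policy `π`. -/
def avail {N T : ℕ} {Nbr : Fin T → Finset (Fin N)} (π : Policy N T Nbr)
    (ω : Flags N T) (t : Fin T) : Finset (Fin N) :=
  Finset.univ \ ((stateUpTo π ω t.val).1.filter fun i => ω i t = false)

/-- `A_t`: the resource matched at time `t` under policy `π` (`none` = no match). -/
def act {N T : ℕ} {Nbr : Fin T → Finset (Fin N)} (π : Policy N T Nbr)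
    (ω : Flags N T) (t : Fin T) : Option (Fin N) :=
  π.act t (avail π ω t) (stateUpTo π ω t.val).2

/-- The total reward collected by policy `π` on the sample path `ω`. -/
def reward {N T : ℕ} {Nbr : Fin T → Finset (Fin N)} (r : Fin N → ℝ)
    (π : Policy N T Nbr) (ω : Flags N T) : ℝ :=
  ∑ t : Fin T, (act π ω t).elim 0 r

/-- Probability of the flag configuration `ω` when `P_{it} ~ Bernoulli (p i)`
independently. -/
noncomputable def weight {N T : ℕ} (p : Fin N → ℝ) (ω : Flags N T) : ℝ :=
  ∏ i : Fin N, ∏ t : Fin T, if ω i t then p i else 1 - p i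

/-- Expectation over the i.i.d. Bernoulli return flags. -/
noncomputable def expect {N T : ℕ} (p : Fin N → ℝ) (f : Flags N T → ℝ) : ℝ :=
  ∑ ω : Flags N T, weight p ω * f ω

/-- The greedy policy: match the available neighboring resource of largest
index (equivalently, of highest reward, since rewards are sorted). -/
def greedy (N T : ℕ) (Nbr : Fin T → Finset (Fin N)) : Policy N T Nbr where
  act := fun t I _ => if h : (I ∩ Nbr t).Nonempty then some ((I ∩ Nbr t).max' h) else none
  feasible := by
    intro t I hist i hi
    try simp only at hi
    by_cases h : (I ∩ Nbr t).Nonempty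
    · rw [dif_pos h, Option.some.injEq] at hi
      exact hi ▸ Finset.max'_mem _ h
    · rw [dif_neg h] at hi
      exact absurd hi (by simp)

/-- `Greedy(I)`: the expected total reward of the greedy policy. -/
noncomputable def greedyVal (N T : ℕ) (Nbr : Fin T → Finset (Fin N))
    (r : Fin N → ℝ) (p : Fin N → ℝ) : ℝ :=
  expect p (reward r (greedy N T Nbr))

/-- `OPT(I)`: the optimal expected total reward over all (clairvoyant)
policies; such a policy knows the whole instance, including the request
sequence, but observes returns only as they occur. -/
noncomputable def optVal (N T : ℕ) (Nbr : Fin T → Finset (Fin N))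
    (r : Fin N → ℝ) (p : Fin N → ℝ) : ℝ :=
  ⨆ π : Policy N T Nbr, expect p (reward r π)

/-!
Take two unit-reward resources and two requests: request `0` may use either resource, request `1`
only resource `1`. Greedy breaks the tie towards resource `1`, so request `1` is served only if
resource `1` has already returned, which happens with probability `p`; hence `Greedy = 1 + p`.
Matching each request `t` to resource `t` always collects `2`, so `OPT ≥ 2`.
-/

section Expectation

variable {N T : ℕ} (p : Fin N → ℝ)

theorem sum_flags_prod (g : Fin N → Fin T → Bool → ℝ) :
    ∑ ω : Flags N T, ∏ i, ∏ t, g i t (ω i t) = ∏ i, ∏ t, (g i t true + g i t false) := by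
  rw [← Fintype.prod_sum (fun i (x : Fin T → Bool) => ∏ t, g i t (x t))]
  simp only [← Fintype.prod_sum, Fintype.sum_bool]

theorem sum_weight : ∑ ω : Flags N T, weight p ω = 1 := by
  simp [weight, sum_flags_prod (fun i _ b => if b then p i else 1 - p i)]

theorem expect_const (c : ℝ) : _root_.expect p (fun _ : Flags N T => c) = c := by
  rw [_root_.expect, ← sum_mul, sum_weight, one_mul]

theorem expect_add (f g : Flags N T → ℝ) :
    _root_.expect p (fun ω => f ω + g ω) = _root_.expect p f + _root_.expect p g := by
  simp only [_root_.expect, mul_add, sum_add_distrib]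

theorem expect_flag (i₀ : Fin N) (t₀ : Fin T) :
    _root_.expect p (fun ω => if ω i₀ t₀ then 1 else 0) = p i₀ := by
  -- the weight factors, with the outcome `ω i₀ t₀ = false` given mass `0`
  set g : Fin N → Fin T → Bool → ℝ := fun i t b =>
    if b then p i else if i = i₀ ∧ t = t₀ then 0 else 1 - p i
  have hg : ∀ ω : Flags N T,
      weight p ω * (if ω i₀ t₀ then 1 else 0) = ∏ i, ∏ t, g i t (ω i t) := by
    intro ω
    cases h : ω i₀ t₀
    · rw [if_neg Bool.false_ne_true, mul_zero, eq_comm]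
      exact prod_eq_zero (mem_univ i₀) (prod_eq_zero (mem_univ t₀) (by simp [g, h]))
    · rw [if_pos rfl, mul_one, weight]
      refine prod_congr rfl fun i _ => prod_congr rfl fun t _ => ?_
      by_cases hit : i = i₀ ∧ t = t₀
      · obtain ⟨rfl, rfl⟩ := hit
        simp [g, h]
      · cases ω i t <;> simp [g, hit]
  rw [_root_.expect, sum_congr rfl fun ω _ => hg ω, sum_flags_prod]
  calc ∏ i, ∏ t, (g i t true + g i t false)
      = ∏ i, ∏ t, if i = i₀ then (if t = t₀ then p i₀ else 1) else 1 := by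
        refine prod_congr rfl fun i _ => prod_congr rfl fun t _ => ?_
        by_cases hi : i = i₀ <;> by_cases ht : t = t₀ <;> simp [g, hi, ht]
    _ = p i₀ := by simp

end Expectation

/-- A policy enters the reward only through its table of actions `ω ↦ t ↦ act π ω t`, of which
there are finitely many. -/
theorem finite_range_expect_reward (N T : ℕ) (Nbr : Fin T → Finset (Fin N)) (r p : Fin N → ℝ) :
    (Set.range fun π : Policy N T Nbr => _root_.expect p (reward r π)).Finite :=
  (Set.finite_range fun a : Flags N T → Fin T → Option (Fin N) =>
    _root_.expect p fun ω => ∑ t, (a ω t).elim 0 r).subset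
    (by rintro _ ⟨π, rfl⟩; exact ⟨fun ω t => act π ω t, rfl⟩)

theorem expect_reward_le_optVal {N T : ℕ} {Nbr : Fin T → Finset (Fin N)} (r p : Fin N → ℝ)
    (π : Policy N T Nbr) : _root_.expect p (reward r π) ≤ optVal N T Nbr r p :=
  le_ciSup (finite_range_expect_reward N T Nbr r p).bddAbove π

def tightNbr : Fin 2 → Finset (Fin 2) := fun t => if t = 0 then univ else {1}

def diagonalPolicy (n : ℕ) (Nbr : Fin n → Finset (Fin n)) : Policy n n Nbr where
  act t I _ := if t ∈ I ∩ Nbr t then some t else none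
  feasible t I _ i h := by
    split_ifs at h with ht
    exact Option.some_injective _ h ▸ ht

theorem reward_greedy_tight (ω : Flags 2 2) :
    reward (fun _ => 1) (greedy 2 2 tightNbr) ω = 1 + if ω 1 1 then 1 else 0 := by
  have h₀ : act (greedy 2 2 tightNbr) ω 0 = some 1 := by revert ω; decide
  have h₁ : act (greedy 2 2 tightNbr) ω 1 = if ω 1 1 then some 1 else none := by
    revert ω; decide
  rw [reward, Fin.sum_univ_two, h₀, h₁]
  cases ω 1 1 <;> rfl

theorem reward_diagonalPolicy_tight (ω : Flags 2 2) :
    reward (fun _ => 1) (diagonalPolicy 2 tightNbr) ω = 2 := by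
  have h : ∀ t, act (diagonalPolicy 2 tightNbr) ω t = some t := by revert ω; decide
  rw [reward, Fin.sum_univ_two, h, h]
  norm_num

theorem greedyVal_tight (p : ℝ) : greedyVal 2 2 tightNbr (fun _ => 1) (fun _ => p) = 1 + p := by
  rw [greedyVal, funext reward_greedy_tight, expect_add, _root_.expect_const, expect_flag]

theorem two_le_optVal_tight (p : ℝ) : 2 ≤ optVal 2 2 tightNbr (fun _ => 1) (fun _ => p) := by
  calc (2 : ℝ) = _root_.expect (fun _ => p) (reward (fun _ => 1) (diagonalPolicy 2 tightNbr)) := by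
        rw [funext reward_diagonalPolicy_tight, _root_.expect_const]
    _ ≤ _ := expect_reward_le_optVal _ _ _

theorem greedy_geometric_tight_general
    (p : ℝ) (hp0 : 0 ≤ p) (ε : ℝ) (hε : 0 < ε) :
    ∃ (N T : ℕ) (r : Fin N → ℝ) (Nbr : Fin T → Finset (Fin N)),
      (∀ i, 0 ≤ r i) ∧ Monotone r ∧
      0 < optVal N T Nbr r (fun _ => p) ∧
      greedyVal N T Nbr r (fun _ => p) / optVal N T Nbr r (fun _ => p)
        ≤ (1 + p) / 2 + ε := by
  have hopt := two_le_optVal_tight p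
  refine ⟨2, 2, fun _ => 1, tightNbr, fun _ => zero_le_one, monotone_const, by linarith, ?_⟩
  rw [greedyVal_tight]
  calc (1 + p) / optVal 2 2 tightNbr (fun _ => 1) (fun _ => p)
      ≤ (1 + p) / 2 := div_le_div_of_nonneg_left (by linarith) two_pos hopt
    _ ≤ (1 + p) / 2 + ε := le_add_of_nonneg_right hε.le

/-- **Tightness of the ratio `(1+p)/2`.**
For every `p ∈ [0, 1]` and every `ε > 0` there is an instance of the online
matching problem with reusable resources, in which every usage-duration
distribution is `Geometric p` (encoded by the shared-Bernoulli return flags,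
all with the same parameter `p`), such that
`Greedy(I) / OPT(I) ≤ (1 + p) / 2 + ε` (and `OPT(I) > 0`, so the ratio is a
genuine competitive ratio). -/
theorem greedy_geometric_tight
    (p : ℝ) (hp0 : 0 ≤ p) (hp1 : p ≤ 1) (ε : ℝ) (hε : 0 < ε) :
    ∃ (N T : ℕ) (r : Fin N → ℝ) (Nbr : Fin T → Finset (Fin N)),
      (∀ i, 0 ≤ r i) ∧ Monotone r ∧
      0 < optVal N T Nbr r (fun _ => p) ∧
      greedyVal N T Nbr r (fun _ => p) / optVal N T Nbr r (fun _ => p)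
        ≤ (1 + p) / 2 + ε :=
  greedy_geometric_tight_general p hp0 ε hε
end

section
/- Under the shared-Bernoulli coupling of Greedy and OPT with geometric usage durations F_i = Geometric(p_i) and p = min_i p_i, LOST ≤ ((1 - p)/(1 + p)) · Greedy(I). -/
/-!
Potential argument. Let `Φ_t` be the total reward of the resources that Greedy holds and `π`
does not at the start of step `t`, and `c = (1 - p) / (1 + p)`. Then
`LOST_t + c (Φ_{t+1} - Φ_t) - c Greedy_t` has non-positive expectation for every `t`. Outside a
loss, `Φ` grows by at most Greedy's reward. A loss needs `π` to match some `i` that Greedy holds;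
fix all return flags but `P_{it}`. If `P_{it} = 0` (probability `1 - p_i`), `Φ` drops by `r_i`
and `π` may lose `r_i`; if `P_{it} = 1`, nothing is lost and, whenever the loss event would have
occurred, Greedy itself takes `i`, so `Φ` drops by `r_i` and Greedy earns `r_i`. Since
`c (1 + p_i) ≥ 1 - p_i`, the average is `≤ 0`. Summing over `t`, with `Φ_0 = 0 ≤ Φ_T`, gives
`LOST ≤ c · Greedy(I)`.
-/

open Finset

/-- `LOST`: the expected reward collected by the benchmark policy `π` (playing
the role of `OPT`, coupled with Greedy via the shared Bernoulli return flags)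
at `(i, t)` such that `A*_t = i` and the event `O_{it}` occurs, where `O_{it}`
is the event that every resource `j ≥ i` is unavailable under Greedy at time
`t`. -/
noncomputable def lost (N T : ℕ) (Nbr : Fin T → Finset (Fin N)) (r : Fin N → ℝ)
    (pv : Fin N → ℝ) (π : Policy N T Nbr) : ℝ :=
  expect pv (fun ω => ∑ t : Fin T, ∑ i : Fin N,
    if act π ω t = some i ∧ (∀ j, i ≤ j → j ∉ avail (greedy N T Nbr) ω t)
    then r i else 0)

/-- Resources in use at the end of step `n - 1`, before the returns of step `n` are applied. -/
def busy {N T : ℕ} {Nbr : Fin T → Finset (Fin N)} (π : Policy N T Nbr) (ω : Flags N T)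
    (n : ℕ) : Finset (Fin N) :=
  (stateUpTo π ω n).1

section Dynamics

variable {N T : ℕ} {Nbr : Fin T → Finset (Fin N)} (π : Policy N T Nbr) (ω : Flags N T)

lemma stateUpTo_succ (t : Fin T) :
    stateUpTo π ω (t + 1) = step π ω (stateUpTo π ω t) t := by
  rw [stateUpTo, List.take_add_one, List.foldl_append,
    List.getElem?_eq_getElem (by simp), List.getElem_finRange]
  rfl

lemma mem_avail {t : Fin T} {j : Fin N} :
    j ∈ avail π ω t ↔ j ∉ busy π ω t ∨ ω j t = true := by
  simp [avail, busy, imp_iff_not_or]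

lemma busy_succ (t : Fin T) :
    busy π ω (t + 1) = (busy π ω t).filter (fun j => ω j t = false) ∪ (act π ω t).toFinset := by
  rw [busy, stateUpTo_succ]
  unfold step
  cases h : act π ω t <;> simp only [act, avail] at h <;> simp [h, busy]

lemma act_mem_avail_inter {t : Fin T} {i : Fin N} (h : act π ω t = some i) :
    i ∈ avail π ω t ∩ Nbr t :=
  π.feasible _ _ _ i h

lemma stateUpTo_congr {ω' : Flags N T} {n : ℕ}
    (h : ∀ i (s : Fin T), (s : ℕ) < n → ω i s = ω' i s) :
    stateUpTo π ω n = stateUpTo π ω' n := by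
  unfold stateUpTo
  refine List.foldl_ext _ _ _ fun s t ht => ?_
  obtain ⟨k, hk, rfl⟩ := List.mem_take_iff_getElem.1 ht
  have hflags : ∀ i, ω i (List.finRange T)[k] = ω' i (List.finRange T)[k] :=
    fun i => h i _ (by simpa using (lt_min_iff.1 hk).1)
  unfold step
  simp only [hflags]

end Dynamics

def flipAt {N T : ℕ} (ω : Flags N T) (i : Fin N) (t : Fin T) : Flags N T :=
  fun j s => if j = i ∧ s = t then !ω j s else ω j s

section Flip

variable {N T : ℕ} {Nbr : Fin T → Finset (Fin N)} (π : Policy N T Nbr) (ω : Flags N T)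
  (i : Fin N) (t : Fin T)

@[simp]
lemma flipAt_self : flipAt ω i t i t = !ω i t := if_pos ⟨rfl, rfl⟩

lemma flipAt_of_ne {j : Fin N} {s : Fin T} (h : ¬(j = i ∧ s = t)) : flipAt ω i t j s = ω j s :=
  if_neg h

@[simp]
lemma flipAt_flipAt : flipAt (flipAt ω i t) i t = ω := by
  funext j s
  by_cases h : j = i ∧ s = t <;> simp [flipAt, h]

@[simp]
lemma stateUpTo_flipAt : stateUpTo π (flipAt ω i t) t = stateUpTo π ω t :=
  stateUpTo_congr π _ fun _ _ hs => flipAt_of_ne ω i t fun h => hs.ne (congrArg Fin.val h.2)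

@[simp]
lemma busy_flipAt : busy π (flipAt ω i t) t = busy π ω t :=
  congrArg Prod.fst (stateUpTo_flipAt π ω i t)

variable {π ω i t}

lemma mem_avail_flipAt_of_ne {j : Fin N} (hj : j ≠ i) :
    j ∈ avail π (flipAt ω i t) t ↔ j ∈ avail π ω t := by
  rw [mem_avail, mem_avail, busy_flipAt, flipAt_of_ne ω i t fun h => hj h.1]

lemma avail_flipAt (hi : i ∉ busy π ω t) : avail π (flipAt ω i t) t = avail π ω t := by
  ext j
  by_cases hj : j = i
  · subst hj
    simp [mem_avail, hi]
  · exact mem_avail_flipAt_of_ne hj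

lemma act_flipAt (hi : i ∉ busy π ω t) : act π (flipAt ω i t) t = act π ω t := by
  rw [act, act, avail_flipAt hi, stateUpTo_flipAt]

end Flip

lemma act_greedy_eq_some {N T : ℕ} {Nbr : Fin T → Finset (Fin N)} {ω : Flags N T} {t : Fin T}
    {i : Fin N} (hi : i ∈ avail (greedy N T Nbr) ω t ∩ Nbr t)
    (hmax : ∀ j, i < j → j ∉ avail (greedy N T Nbr) ω t) :
    act (greedy N T Nbr) ω t = some i := by
  have hne : (avail (greedy N T Nbr) ω t ∩ Nbr t).Nonempty := ⟨i, hi⟩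
  have hact : act (greedy N T Nbr) ω t = some ((avail (greedy N T Nbr) ω t ∩ Nbr t).max' hne) :=
    dif_pos hne
  rw [hact, Option.some_inj]
  refine le_antisymm (not_lt.1 fun hlt => hmax _ hlt ?_) (Finset.le_max' _ i hi)
  exact (Finset.mem_inter.1 (Finset.max'_mem _ hne)).1

section Potential

variable {N T : ℕ} {Nbr : Fin T → Finset (Fin N)} (r : Fin N → ℝ) (π : Policy N T Nbr)
  (ω : Flags N T)

def gap (n : ℕ) : Finset (Fin N) := busy (greedy N T Nbr) ω n \ busy π ω n

noncomputable def potential (n : ℕ) : ℝ := ∑ j ∈ gap π ω n, r j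

lemma potential_zero : potential r π ω 0 = 0 := rfl

lemma potential_nonneg (hr : ∀ i, 0 ≤ r i) (n : ℕ) : 0 ≤ potential r π ω n :=
  Finset.sum_nonneg fun j _ => hr j

lemma gap_succ_subset (t : Fin T) :
    gap π ω (t + 1) ⊆ (gap π ω t ∪ (act (greedy N T Nbr) ω t).toFinset) \ (act π ω t).toFinset := by
  intro j
  simp only [gap, busy_succ, Finset.mem_sdiff, Finset.mem_union, Finset.mem_filter,
    Option.mem_toFinset, Option.mem_def]
  tauto

lemma sum_union_toFinset_le {α : Type*} [DecidableEq α] {f : α → ℝ} (hf : ∀ a, 0 ≤ f a)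
    (s : Finset α) (o : Option α) :
    ∑ a ∈ s ∪ o.toFinset, f a ≤ ∑ a ∈ s, f a + o.elim 0 f := by
  have hinter := Finset.sum_union_inter (s₁ := s) (s₂ := o.toFinset) (f := f)
  have hnonneg : 0 ≤ ∑ a ∈ s ∩ o.toFinset, f a := Finset.sum_nonneg fun a _ => hf a
  have ho : ∑ a ∈ o.toFinset, f a = o.elim 0 f := by cases o <;> simp
  linarith

variable {r π ω}

lemma potential_succ_le_sum_union (hr : ∀ i, 0 ≤ r i) (t : Fin T) :
    potential r π ω (t + 1) ≤ ∑ j ∈ gap π ω t ∪ (act (greedy N T Nbr) ω t).toFinset, r j :=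
  Finset.sum_le_sum_of_subset_of_nonneg ((gap_succ_subset π ω t).trans Finset.sdiff_subset)
    fun j _ _ => hr j

lemma potential_succ_le (hr : ∀ i, 0 ≤ r i) (t : Fin T) :
    potential r π ω (t + 1) ≤ potential r π ω t + (act (greedy N T Nbr) ω t).elim 0 r :=
  (potential_succ_le_sum_union hr t).trans (sum_union_toFinset_le hr _ _)

lemma potential_succ_add_le_sum_union (hr : ∀ i, 0 ≤ r i) {t : Fin T} {i : Fin N}
    (hact : act π ω t = some i) (hi : i ∈ gap π ω t) :
    potential r π ω (t + 1) + r i ≤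
      ∑ j ∈ gap π ω t ∪ (act (greedy N T Nbr) ω t).toFinset, r j := by
  have hsub : {i} ⊆ gap π ω t ∪ (act (greedy N T Nbr) ω t).toFinset :=
    Finset.singleton_subset_iff.2 (Finset.mem_union_left _ hi)
  have hle := Finset.sum_le_sum_of_subset_of_nonneg (f := r) (gap_succ_subset π ω t)
    fun j _ _ => hr j
  rw [hact, Option.toFinset_some, Finset.sum_sdiff_eq_sub hsub, Finset.sum_singleton] at hle
  exact le_sub_iff_add_le.1 hle

end Potential

section Drift

variable {N T : ℕ} {Nbr : Fin T → Finset (Fin N)} (r : Fin N → ℝ) (c : ℝ) (π : Policy N T Nbr)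
  (t : Fin T) (ω : Flags N T)

noncomputable def lostAt : ℝ :=
  ∑ i : Fin N, if act π ω t = some i ∧ (∀ j, i ≤ j → j ∉ avail (greedy N T Nbr) ω t)
    then r i else 0

def collision : Option (Fin N) := (act π ω t).filter fun i => decide (i ∈ gap π ω t)

noncomputable def drift : ℝ :=
  lostAt r π t ω + c * (potential r π ω (t + 1) - potential r π ω t)
    - c * (act (greedy N T Nbr) ω t).elim 0 r

lemma lostAt_of_act_eq_some {i : Fin N} (h : act π ω t = some i) :
    lostAt r π t ω = if ∀ j, i ≤ j → j ∉ avail (greedy N T Nbr) ω t then r i else 0 := by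
  simp [lostAt, h, ite_and]

lemma collision_eq_some_iff {i : Fin N} :
    collision π t ω = some i ↔ act π ω t = some i ∧ i ∈ gap π ω t := by
  simp [collision, Option.filter_eq_some_iff]

variable {π t ω}

lemma collision_flipAt {i : Fin N} (h : collision π t ω = some i) :
    collision π t (flipAt ω i t) = some i := by
  rw [collision_eq_some_iff] at h ⊢
  have hi : i ∉ busy π ω t := (Finset.mem_sdiff.1 h.2).2
  rw [act_flipAt hi, gap, busy_flipAt, busy_flipAt]
  exact h

lemma lostAt_eq_zero (h : collision π t ω = none) : lostAt r π t ω = 0 := by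
  cases hact : act π ω t with
  | none => simp [lostAt, hact]
  | some i =>
    rw [lostAt_of_act_eq_some r π t ω hact, if_neg]
    intro hlost
    have hG := hlost i le_rfl
    have hπ := (Finset.mem_inter.1 (act_mem_avail_inter π ω hact)).1
    rw [mem_avail, not_or, Bool.not_eq_true] at hG
    rw [mem_avail, hG.2] at hπ
    have hcol : collision π t ω = some i :=
      (collision_eq_some_iff π t ω).2 ⟨hact, Finset.mem_sdiff.2 ⟨not_not.1 hG.1, by simpa using hπ⟩⟩
    simp [hcol] at h

variable {r c}

lemma drift_nonpos_of_collision_eq_none (hr : ∀ i, 0 ≤ r i) (hc : 0 ≤ c)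
    (h : collision π t ω = none) : drift r c π t ω ≤ 0 := by
  have hΦ := mul_le_mul_of_nonneg_left (potential_succ_le (π := π) (ω := ω) hr t) hc
  rw [drift, lostAt_eq_zero r h]
  linarith

lemma drift_le_of_collision (hr : ∀ i, 0 ≤ r i) (hc : 0 ≤ c) {i : Fin N}
    (h : collision π t ω = some i) : drift r c π t ω ≤ lostAt r π t ω - c * r i := by
  obtain ⟨hact, hi⟩ := (collision_eq_some_iff π t ω).1 h
  have hΦ : potential r π ω (t + 1) + r i ≤
      potential r π ω t + (act (greedy N T Nbr) ω t).elim 0 r :=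
    (potential_succ_add_le_sum_union hr hact hi).trans (sum_union_toFinset_le hr _ _)
  have := mul_le_mul_of_nonneg_left hΦ hc
  rw [drift]
  linarith

lemma drift_le_of_collision_of_act_greedy (hr : ∀ i, 0 ≤ r i) (hc : 0 ≤ c) {i : Fin N}
    (h : collision π t ω = some i) (hg : act (greedy N T Nbr) ω t = some i) :
    drift r c π t ω ≤ lostAt r π t ω - 2 * c * r i := by
  obtain ⟨hact, hi⟩ := (collision_eq_some_iff π t ω).1 h
  have hΦ := potential_succ_add_le_sum_union hr hact hi
  rw [hg, Option.toFinset_some, Finset.union_eq_left.2 (Finset.singleton_subset_iff.2 hi)] at hΦ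
  have := mul_le_mul_of_nonneg_left hΦ hc
  rw [drift, hg]
  simp only [potential, Option.elim] at this ⊢
  linarith

lemma drift_pair_le (hr : ∀ i, 0 ≤ r i) (hc : 0 ≤ c) {q : ℝ} (hq0 : 0 ≤ q) (hq1 : q ≤ 1)
    (hcq : 1 - q ≤ c * (1 + q)) {i : Fin N} (h : collision π t ω = some i)
    (hflag : ω i t = false) :
    (1 - q) * drift r c π t ω + q * drift r c π t (flipAt ω i t) ≤ 0 := by
  obtain ⟨hact, hi⟩ := (collision_eq_some_iff π t ω).1 h
  have hcol' := collision_flipAt h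
  have hact' : act π (flipAt ω i t) t = some i := ((collision_eq_some_iff π t _).1 hcol').1
  have hav' : i ∈ avail (greedy N T Nbr) (flipAt ω i t) t := by simp [mem_avail, hflag]
  have hlost' : lostAt r π t (flipAt ω i t) = 0 := by
    rw [lostAt_of_act_eq_some r π t _ hact', if_neg fun hO => hO i le_rfl hav']
  have hd := drift_le_of_collision hr hc h
  have hri := hr i
  rw [lostAt_of_act_eq_some r π t ω hact] at hd
  by_cases hO : ∀ j, i ≤ j → j ∉ avail (greedy N T Nbr) ω t
  · have hg' : act (greedy N T Nbr) (flipAt ω i t) t = some i := by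
      refine act_greedy_eq_some
        (Finset.mem_inter.2 ⟨hav', (Finset.mem_inter.1 (act_mem_avail_inter π ω hact)).2⟩)
        fun j hij => ?_
      rw [mem_avail_flipAt_of_ne hij.ne']
      exact hO j hij.le
    have hd' := drift_le_of_collision_of_act_greedy hr hc hcol' hg'
    rw [if_pos hO] at hd
    rw [hlost'] at hd'
    nlinarith [mul_le_mul_of_nonneg_left hd (sub_nonneg.2 hq1), mul_le_mul_of_nonneg_left hd' hq0]
  · have hd' := drift_le_of_collision hr hc hcol'
    rw [if_neg hO] at hd
    rw [hlost'] at hd'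
    nlinarith [mul_le_mul_of_nonneg_left hd (sub_nonneg.2 hq1), mul_le_mul_of_nonneg_left hd' hq0]

end Drift

section Expectation

variable {N T : ℕ} {pv : Fin N → ℝ}

lemma weight_nonneg (hpv0 : ∀ i, 0 ≤ pv i) (hpv1 : ∀ i, pv i ≤ 1) (ω : Flags N T) :
    0 ≤ weight pv ω :=
  Finset.prod_nonneg fun i _ => Finset.prod_nonneg fun t _ => by
    split_ifs
    exacts [hpv0 i, sub_nonneg.2 (hpv1 i)]

lemma weight_flipAt (hpv0 : ∀ i, 0 ≤ pv i) (hpv1 : ∀ i, pv i ≤ 1) {ω : Flags N T} {i : Fin N}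
    {t : Fin T} (hflag : ω i t = false) :
    ∃ R, 0 ≤ R ∧ weight pv ω = (1 - pv i) * R ∧ weight pv (flipAt ω i t) = pv i * R := by
  classical
  let g : Flags N T → Fin N × Fin T → ℝ := fun ω x => if ω x.1 x.2 then pv x.1 else 1 - pv x.1
  have hweight : ∀ ω, weight pv ω = g ω (i, t) * ∏ x ∈ {(i, t)}ᶜ, g ω x := fun ω => by
    rw [← Fintype.prod_eq_mul_prod_compl, Fintype.prod_prod_type]
    rfl
  have hrest : ∏ x ∈ {(i, t)}ᶜ, g (flipAt ω i t) x = ∏ x ∈ {(i, t)}ᶜ, g ω x :=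
    Finset.prod_congr rfl fun x hx => by
      have hx : x ≠ (i, t) := by simpa using hx
      simp only [g, flipAt_of_ne ω i t fun h => hx (Prod.ext h.1 h.2)]
  refine ⟨∏ x ∈ {(i, t)}ᶜ, g ω x, Finset.prod_nonneg fun x _ => ?_, ?_, ?_⟩
  · simp only [g]
    split_ifs
    exacts [hpv0 _, sub_nonneg.2 (hpv1 _)]
  · rw [hweight]
    simp [g, hflag]
  · rw [hweight, hrest]
    simp [g, hflag]

lemma sum_eq_sum_filter_add_flipAt (g : Flags N T → ℝ) {s : Finset (Flags N T)} {i : Fin N}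
    {t : Fin T} (hs : ∀ ω ∈ s, flipAt ω i t ∈ s) :
    ∑ ω ∈ s, g ω = ∑ ω ∈ s with ω i t = false, (g ω + g (flipAt ω i t)) := by
  rw [Finset.sum_add_distrib, ← Finset.sum_filter_add_sum_filter_not s (fun ω => ω i t = false)]
  congr 1
  refine Finset.sum_nbij' (flipAt · i t) (flipAt · i t) ?_ ?_ ?_ ?_ ?_ <;>
    simp +contextual [Finset.mem_filter, hs]

/-- Toggling `P_{it}` pairs each sample path where the pivot is `i` and `P_{it} = 0` with one
where `P_{it} = 1`; their weights are in the ratio `(1 - p_i) : p_i`. -/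
lemma expect_nonpos_of_pairing (hpv0 : ∀ i, 0 ≤ pv i) (hpv1 : ∀ i, pv i ≤ 1)
    (f : Flags N T → ℝ) (t : Fin T) (pivot : Flags N T → Option (Fin N))
    (hflip : ∀ ω i, pivot ω = some i → pivot (flipAt ω i t) = some i)
    (hnone : ∀ ω, pivot ω = none → f ω ≤ 0)
    (hpair : ∀ ω i, pivot ω = some i → ω i t = false →
      (1 - pv i) * f ω + pv i * f (flipAt ω i t) ≤ 0) :
    expect pv f ≤ 0 := by
  rw [_root_.expect, ← Finset.sum_fiberwise Finset.univ pivot]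
  refine Finset.sum_nonpos fun o _ => ?_
  cases o with
  | none =>
    exact Finset.sum_nonpos fun ω hω =>
      mul_nonpos_of_nonneg_of_nonpos (weight_nonneg hpv0 hpv1 ω) (hnone ω (Finset.mem_filter.1 hω).2)
  | some i =>
    rw [sum_eq_sum_filter_add_flipAt _ fun ω hω => by simpa using hflip ω i (by simpa using hω)]
    refine Finset.sum_nonpos fun ω hω => ?_
    simp only [Finset.mem_filter, Finset.mem_univ, true_and] at hω
    obtain ⟨R, hR, hw, hw'⟩ := weight_flipAt hpv0 hpv1 hω.2
    rw [hw, hw']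
    nlinarith [mul_nonpos_of_nonneg_of_nonpos hR (hpair ω i hω.1 hω.2)]

lemma expect_mono (hpv0 : ∀ i, 0 ≤ pv i) (hpv1 : ∀ i, pv i ≤ 1) {f g : Flags N T → ℝ}
    (h : ∀ ω, f ω ≤ g ω) : expect pv f ≤ expect pv g :=
  Finset.sum_le_sum fun ω _ => mul_le_mul_of_nonneg_left (h ω) (weight_nonneg hpv0 hpv1 ω)

lemma expect_sum_add_mul (f : Fin T → Flags N T → ℝ) (c : ℝ) (g : Flags N T → ℝ) :
    expect pv (fun ω => ∑ t, f t ω + c * g ω) = ∑ t, expect pv (f t) + c * expect pv g := by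
  simp only [_root_.expect, mul_add, Finset.sum_add_distrib, Finset.mul_sum]
  rw [Finset.sum_comm]
  congr 1
  exact Finset.sum_congr rfl fun ω _ => by ring

end Expectation

section DriftSum

variable {N T : ℕ} {Nbr : Fin T → Finset (Fin N)} {r : Fin N → ℝ} {c : ℝ} {π : Policy N T Nbr}

lemma sum_drift (ω : Flags N T) :
    ∑ t, drift r c π t ω =
      ∑ t, lostAt r π t ω + c * potential r π ω T - c * reward r (greedy N T Nbr) ω := by
  have htel : ∑ t : Fin T, (potential r π ω (t + 1) - potential r π ω t) = potential r π ω T := by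
    rw [Fin.sum_univ_eq_sum_range (fun n => potential r π ω (n + 1) - potential r π ω n),
      Finset.sum_range_sub, potential_zero, sub_zero]
  simp only [drift, reward, Finset.sum_sub_distrib, Finset.sum_add_distrib, ← Finset.mul_sum,
    htel]

lemma sum_lostAt_le (hr : ∀ i, 0 ≤ r i) (hc : 0 ≤ c) (ω : Flags N T) :
    ∑ t, lostAt r π t ω ≤ ∑ t, drift r c π t ω + c * reward r (greedy N T Nbr) ω := by
  rw [sum_drift]
  linarith [mul_nonneg hc (potential_nonneg r π ω hr T)]

lemma expect_drift_nonpos {pv : Fin N → ℝ} (hr : ∀ i, 0 ≤ r i) (hc : 0 ≤ c)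
    (hpv0 : ∀ i, 0 ≤ pv i) (hpv1 : ∀ i, pv i ≤ 1) (hcpv : ∀ i, 1 - pv i ≤ c * (1 + pv i))
    (t : Fin T) : expect pv (drift r c π t) ≤ 0 :=
  expect_nonpos_of_pairing hpv0 hpv1 _ t (collision π t) (fun _ _ h => collision_flipAt h)
    (fun _ h => drift_nonpos_of_collision_eq_none hr hc h)
    (fun _ i h hflag => drift_pair_le hr hc (hpv0 i) (hpv1 i) (hcpv i) h hflag)

end DriftSum

lemma one_sub_le_div_mul_one_add {p q : ℝ} (hp : 0 ≤ p) (hpq : p ≤ q) :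
    1 - q ≤ (1 - p) / (1 + p) * (1 + q) := by
  rw [div_mul_eq_mul_div, le_div_iff₀ (by linarith)]
  nlinarith

theorem lost_le_geometric_general
    (N T : ℕ)
    (r : Fin N → ℝ) (hr0 : ∀ i, 0 ≤ r i)
    (Nbr : Fin T → Finset (Fin N))
    (pv : Fin N → ℝ) (hpv0 : ∀ i, 0 ≤ pv i) (hpv1 : ∀ i, pv i ≤ 1)
    (p : ℝ) (hp : p = ⨅ i, pv i)
    (π : Policy N T Nbr) :
    lost N T Nbr r pv π ≤ ((1 - p) / (1 + p)) * greedyVal N T Nbr r pv := by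
  set c := (1 - p) / (1 + p)
  have hp0 : 0 ≤ p := hp ▸ Real.iInf_nonneg hpv0
  have hp_le : ∀ i, p ≤ pv i := fun i => hp ▸ ciInf_le (Set.finite_range pv).bddBelow i
  have hp1 : p ≤ 1 := by
    rcases isEmpty_or_nonempty (Fin N) with _ | ⟨⟨i⟩⟩
    · simp [hp]
    · exact (hp_le i).trans (hpv1 i)
  have hc : 0 ≤ c := div_nonneg (by linarith) (by linarith)
  have hcpv i : 1 - pv i ≤ c * (1 + pv i) := one_sub_le_div_mul_one_add hp0 (hp_le i)
  calc lost N T Nbr r pv π = expect pv fun ω => ∑ t, lostAt r π t ω := rfl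
    _ ≤ expect pv fun ω => ∑ t, drift r c π t ω + c * reward r (greedy N T Nbr) ω :=
      expect_mono hpv0 hpv1 (sum_lostAt_le hr0 hc)
    _ = ∑ t, expect pv (drift r c π t) + c * greedyVal N T Nbr r pv := expect_sum_add_mul _ _ _
    _ ≤ c * greedyVal N T Nbr r pv :=
      add_le_of_nonpos_left (Finset.sum_nonpos fun t _ => expect_drift_nonpos hr0 hc hpv0 hpv1 hcpv t)

/-- **Proposition 2.**  Under the shared-Bernoulli coupling of Greedy and any
benchmark policy `π` (in particular the optimal clairvoyant policy `OPT`) with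
geometric usage durations `F i = Geometric (pv i)`, if `p = min_i pv i` then
`LOST ≤ ((1 - p)/(1 + p)) · Greedy(I)`. -/
theorem lost_le_geometric
    (N T : ℕ) (hN : 0 < N)
    (r : Fin N → ℝ) (hr0 : ∀ i, 0 ≤ r i) (hrmono : Monotone r)
    (Nbr : Fin T → Finset (Fin N))
    (pv : Fin N → ℝ) (hpv0 : ∀ i, 0 ≤ pv i) (hpv1 : ∀ i, pv i ≤ 1)
    (p : ℝ) (hp : p = ⨅ i, pv i)
    (π : Policy N T Nbr) :
    lost N T Nbr r pv π ≤ ((1 - p) / (1 + p)) * greedyVal N T Nbr r pv :=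
  lost_le_geometric_general N T r hr0 Nbr pv hpv0 hpv1 p hp π
end
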